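/- Let α ∈ E. If there exist a positive integer n and an integer m such that τ_x^n(α) = q^m·α, then α = c·x^{m/n} for some c ∈ F; more precisely, α^n = c'·x^m for some c' ∈ F. -/

import Mathlib

/-!
The automorphism `σ = τ_x^n` of `E` restricts to `F(x)` as the substitution `x ↦ q^n x`, and
`β = α^n / x^m` is fixed by `σ`. Hence the minimal polynomial of `β` over `F(x)` is fixed
coefficientwise by the substitution. Since `q^n` is not a root of unity, a rational function
`N/D` (in lowest terms, `D` monic) fixed by `x ↦ q^n x` has `D(q^n x) = q^{n·deg D} D(x)` and the
same for `N`, which forces `N` and `D` to be monomials of the same degree: it is a constant.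
So `β` is algebraic over the algebraically closed field `F`, i.e. `β ∈ F`. Finally, if `z^n = x`
then `(α / z^m)^n = β ∈ F`, so `α / z^m ∈ F` as well.
-/

/-- `E`, an algebraic closure of the rational function field `F(x)`. -/
noncomputable abbrev Ebar (F : Type*) [Field F] : Type _ := AlgebraicClosure (RatFunc F)

/-- The element `x` of `F(x) ⊆ E`. -/
noncomputable abbrev Ebar.x (F : Type*) [Field F] : Ebar F :=
  algebraMap (RatFunc F) (Ebar F) RatFunc.X

/-- The embedding of a constant `a ∈ F` into `E`. -/
noncomputable abbrev Ebar.c (F : Type*) [Field F] (a : F) : Ebar F :=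
  algebraMap (RatFunc F) (Ebar F) (RatFunc.C a)

open Polynomial

lemma zpow_pow_comm {G₀ : Type*} [GroupWithZero G₀] (a : G₀) (m : ℤ) (n : ℕ) :
    (a ^ m) ^ n = (a ^ n) ^ m := by
  rw [← zpow_natCast (a ^ m), ← zpow_mul, mul_comm, zpow_mul, zpow_natCast]

lemma RingAut.pow_apply_eq_self {R : Type*} [Semiring R] {τ : RingAut R} {a : R}
    (h : τ a = a) (k : ℕ) : (τ ^ k) a = a := by
  rw [RingAut.coe_pow]
  exact Function.IsFixedPt.iterate h k

lemma RingAut.pow_apply_eq_pow_mul {R : Type*} [Semiring R] {τ : RingAut R} {s x : R}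
    (hs : τ s = s) (hx : τ x = s * x) (k : ℕ) : (τ ^ k) x = s ^ k * x := by
  induction k with
  | zero => simp [RingAut.one_apply]
  | succ k ih =>
    rw [pow_succ, RingAut.mul_apply, hx, map_mul, ih, RingAut.pow_apply_eq_self hs, pow_succ',
      mul_assoc]

lemma IsAlgebraic.mem_range_algebraMap {k K : Type*} [Field k] [IsAlgClosed k] [Field K]
    [Algebra k K] {x : K} (hx : IsAlgebraic k x) : x ∈ Set.range (algebraMap k K) := by
  have := IntermediateField.adjoin.finiteDimensional hx.isIntegral
  rw [← IntermediateField.mem_bot,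
    ← IntermediateField.eq_bot_of_isAlgClosed_of_isAlgebraic (IntermediateField.adjoin k {x})]
  exact IntermediateField.mem_adjoin_simple_self k x

lemma minpoly.map_eq_self_of_apply_eq_self {K L : Type*} [Field K] [Field L] [Algebra K L]
    {σ : L →+* L} {ψ : K →+* K} (hσ : ∀ r, σ (algebraMap K L r) = algebraMap K L (ψ r))
    {β : L} (hint : IsIntegral K β) (hβ : σ β = β) :
    (minpoly K β).map ψ = minpoly K β := by
  have hmonic := minpoly.monic hint
  have hcomp : (algebraMap K L).comp ψ = σ.comp (algebraMap K L) :=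
    RingHom.ext fun r => (hσ r).symm
  have hroot : Polynomial.aeval β ((minpoly K β).map ψ) = 0 :=
    calc Polynomial.aeval β ((minpoly K β).map ψ)
        = (minpoly K β).eval₂ (σ.comp (algebraMap K L)) (σ β) := by
          rw [aeval_def, eval₂_map, hcomp, hβ]
      _ = σ (Polynomial.aeval β (minpoly K β)) := (hom_eval₂ _ _ _ _).symm
      _ = 0 := by rw [minpoly.aeval, map_zero]
  exact eq_of_monic_of_dvd_of_natDegree_le hmonic (hmonic.map ψ) (minpoly.dvd K β hroot)
    natDegree_map_le

namespace Polynomial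

variable {K : Type*} [Field K]

noncomputable def rescale (c : Kˣ) : K[X] ≃ₐ[K] K[X] :=
  algEquivOfCompEqX (C (c : K) * X) (C ((c⁻¹ : Kˣ) : K) * X)
    (by simp [← mul_assoc, ← C_mul]) (by simp [← mul_assoc, ← C_mul])

lemma rescale_apply (c : Kˣ) (p : K[X]) : rescale c p = p.comp (C (c : K) * X) := by
  simp [rescale, comp_eq_aeval]

lemma coeff_rescale (c : Kˣ) (p : K[X]) (i : ℕ) :
    (rescale c p).coeff i = p.coeff i * c ^ i := by
  rw [rescale_apply, comp_C_mul_X_coeff]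

lemma natDegree_rescale (c : Kˣ) (p : K[X]) : (rescale c p).natDegree = p.natDegree := by
  rw [rescale_apply, natDegree_comp, natDegree_C_mul_X _ c.ne_zero, mul_one]

lemma eq_C_mul_X_pow_of_rescale_eq {c : Kˣ} (hc : ¬IsOfFinOrder c) {p : K[X]} {k : ℕ}
    (h : rescale c p = C ((c : K) ^ k) * p) : p = C (p.coeff k) * X ^ k := by
  ext i
  have hi := congr_arg (coeff · i) h
  simp only [coeff_rescale, coeff_C_mul] at hi
  rw [coeff_C_mul_X_pow]
  split_ifs with hik
  · rw [hik]
  · have hpow : (c : K) ^ i ≠ c ^ k := by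
      rw [← Units.val_pow_eq_pow_val, ← Units.val_pow_eq_pow_val, Ne, Units.val_inj]
      exact (injective_pow_iff_not_isOfFinOrder.mpr hc).ne hik
    exact (mul_eq_mul_left_iff.mp (hi.trans (mul_comm _ _))).resolve_left hpow

end Polynomial

namespace RatFunc

variable {K : Type*} [Field K]

noncomputable def rescale (c : Kˣ) : RatFunc K ≃+* RatFunc K :=
  IsFractionRing.ringEquivOfRingEquiv (Polynomial.rescale c).toRingEquiv

lemma rescale_algebraMap (c : Kˣ) (p : K[X]) :
    rescale c (algebraMap K[X] (RatFunc K) p) = algebraMap _ _ (Polynomial.rescale c p) :=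
  IsFractionRing.ringEquivOfRingEquiv_algebraMap _ _

lemma rescale_C (c : Kˣ) (a : K) : rescale c (C a) = C a := by
  rw [← algebraMap_C, rescale_algebraMap, Polynomial.rescale_apply, C_comp]

lemma rescale_X (c : Kˣ) : rescale c X = C (c : K) * X := by
  rw [← algebraMap_X, rescale_algebraMap, Polynomial.rescale_apply, X_comp, map_mul,
    algebraMap_C, algebraMap_X]

lemma ringHom_ext {L : Type*} [Semiring L] {f g : RatFunc K →+* L}
    (hC : ∀ a, f (C a) = g (C a)) (hX : f X = g X) : f = g :=
  IsLocalization.ringHom_ext (nonZeroDivisors K[X]) <| Polynomial.ringHom_ext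
    (fun a => by simpa only [RingHom.comp_apply, algebraMap_C] using hC a)
    (by simpa only [RingHom.comp_apply, algebraMap_X] using hX)

lemma mem_range_algebraMap_of_rescale_eq {c : Kˣ} (hc : ¬IsOfFinOrder c) {r : RatFunc K}
    (hr : rescale c r = r) : r ∈ Set.range (algebraMap K (RatFunc K)) := by
  set N := r.num
  set D := r.denom
  have hmonic : D.Monic := r.monic_denom
  have hD0 : Polynomial.rescale c D ≠ 0 := by simpa using hmonic.ne_zero
  have hcross : N * Polynomial.rescale c D = Polynomial.rescale c N * D := by
    rw [num_mul_eq_mul_denom_iff hD0, ← rescale_algebraMap, ← rescale_algebraMap,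
      ← map_div₀, num_div_denom, hr]
  have hdvd : D ∣ Polynomial.rescale c D :=
    r.isCoprime_num_denom.symm.dvd_of_dvd_mul_left (hcross ▸ dvd_mul_left D _)
  have hD : Polynomial.rescale c D = Polynomial.C ((c : K) ^ D.natDegree) * D := by
    rw [eq_mul_leadingCoeff_of_monic_of_dvd_of_natDegree_le hmonic hdvd
      (Polynomial.natDegree_rescale c D).le, leadingCoeff, Polynomial.natDegree_rescale,
      Polynomial.coeff_rescale, hmonic.coeff_natDegree, one_mul, mul_comm]
  have hN : Polynomial.rescale c N = Polynomial.C ((c : K) ^ D.natDegree) * N :=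
    mul_right_cancel₀ hmonic.ne_zero (by rw [← hcross, hD]; ring)
  have hNX := Polynomial.eq_C_mul_X_pow_of_rescale_eq hc hN
  have hDX := Polynomial.eq_C_mul_X_pow_of_rescale_eq hc hD
  rw [hmonic.coeff_natDegree, map_one, one_mul] at hDX
  refine ⟨N.coeff D.natDegree, ?_⟩
  calc algebraMap K (RatFunc K) (N.coeff D.natDegree)
      = algebraMap K[X] (RatFunc K)
            (Polynomial.C (N.coeff D.natDegree) * Polynomial.X ^ D.natDegree)
          / algebraMap K[X] (RatFunc K) (Polynomial.X ^ D.natDegree) := by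
        rw [map_mul, mul_div_cancel_right₀ _
            (algebraMap_ne_zero (pow_ne_zero _ Polynomial.X_ne_zero)),
          algebraMap_C, algebraMap_eq_C]
    _ = r := by rw [← hNX, ← hDX, num_div_denom]

variable {E : Type*} [Field E] [Algebra (RatFunc K) E]

lemma apply_algebraMap_eq_algebraMap_rescale (c : Kˣ) {σ : E ≃+* E}
    (hC : ∀ a, σ (algebraMap (RatFunc K) E (C a)) = algebraMap (RatFunc K) E (C a))
    (hX : σ (algebraMap (RatFunc K) E X)
      = algebraMap (RatFunc K) E (C (c : K)) * algebraMap (RatFunc K) E X)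
    (r : RatFunc K) : σ (algebraMap (RatFunc K) E r) = algebraMap (RatFunc K) E (rescale c r) :=
  RingHom.congr_fun (ringHom_ext (f := σ.toRingHom.comp (algebraMap _ _))
    (g := (algebraMap _ _).comp (rescale c).toRingHom)
    (fun a => by simpa [rescale_C] using hC a) (by simpa [rescale_X] using hX)) r

lemma mem_range_algebraMap_of_apply_eq_self [IsAlgClosed K] [Algebra K E]
    [IsScalarTower K (RatFunc K) E] [Algebra.IsAlgebraic (RatFunc K) E]
    {c : Kˣ} (hc : ¬IsOfFinOrder c) {σ : E ≃+* E}
    (hσ : ∀ r, σ (algebraMap (RatFunc K) E r) = algebraMap (RatFunc K) E (rescale c r))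
    {β : E} (hβ : σ β = β) : β ∈ Set.range (algebraMap K E) := by
  have hint : IsIntegral (RatFunc K) β := Algebra.IsIntegral.isIntegral β
  have hfix := minpoly.map_eq_self_of_apply_eq_self (σ := σ.toRingHom)
    (ψ := (rescale c).toRingHom) hσ hint hβ
  have hlifts : minpoly (RatFunc K) β ∈ lifts (algebraMap K (RatFunc K)) :=
    (lifts_iff_coeff_lifts _).mpr fun i => mem_range_algebraMap_of_rescale_eq hc <| by
      simpa using congr_arg (coeff · i) hfix
  obtain ⟨p, hp⟩ := (mem_lifts _).mp hlifts
  refine IsAlgebraic.mem_range_algebraMap ⟨p, ?_, ?_⟩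
  · rintro rfl
    exact minpoly.ne_zero hint (by simpa using hp.symm)
  · rw [← aeval_map_algebraMap (RatFunc K), hp, minpoly.aeval]

end RatFunc

lemma Ebar.c_eq_algebraMap (F : Type*) [Field F] (a : F) :
    Ebar.c F a = algebraMap F (Ebar F) a := by
  rw [IsScalarTower.algebraMap_apply F (RatFunc F) (Ebar F), RatFunc.algebraMap_eq_C]

theorem power_of_x_of_qshift_eigenvalue_general
    (F : Type*) [Field F] [IsAlgClosed F]
    (q : F) (hq0 : q ≠ 0) (hqru : ∀ k : ℕ, 0 < k → q ^ k ≠ 1)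
    (τx : Ebar F ≃+* Ebar F)
    (hτxF : ∀ a : F, τx (Ebar.c F a) = Ebar.c F a)
    (hτxx : τx (Ebar.x F) = Ebar.c F q * Ebar.x F)
    (α : Ebar F) (n : ℕ) (hn : 0 < n) (m : ℤ)
    (h : (τx ^ n) α = Ebar.c F q ^ m * α) :
    (∃ (c : F) (z : Ebar F), z ^ n = Ebar.x F ∧ α = Ebar.c F c * z ^ m) ∧
    (∃ c' : F, α ^ n = Ebar.c F c' * Ebar.x F ^ m) := by
  have hqn : ¬IsOfFinOrder (Units.mk0 q hq0 ^ n) := fun hfin => by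
    obtain ⟨k, hk, hk1⟩ := (hfin.of_pow hn.ne').exists_pow_eq_one
    exact hqru k hk (by simpa [Units.ext_iff] using hk1)
  have hX : (τx ^ n) (Ebar.x F) = Ebar.c F q ^ n * Ebar.x F :=
    RingAut.pow_apply_eq_pow_mul (hτxF q) hτxx n
  have hσ := RatFunc.apply_algebraMap_eq_algebraMap_rescale (Units.mk0 q hq0 ^ n)
    (σ := τx ^ n) (fun a => RingAut.pow_apply_eq_self (hτxF a) n) (by simpa using hX)
  have hx0 : Ebar.x F ≠ 0 := by simp [RatFunc.X_ne_zero]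
  have hβ : (τx ^ n) (α ^ n / Ebar.x F ^ m) = α ^ n / Ebar.x F ^ m := by
    rw [map_div₀, map_pow, map_zpow₀, h, hX, mul_pow, mul_zpow, zpow_pow_comm,
      mul_div_mul_left _ _ (zpow_ne_zero _ (pow_ne_zero _ (by simp [Ebar.c, hq0])))]
  obtain ⟨c', hc'⟩ := RatFunc.mem_range_algebraMap_of_apply_eq_self hqn hσ hβ
  have hαn : α ^ n = Ebar.c F c' * Ebar.x F ^ m := by
    rw [Ebar.c_eq_algebraMap, hc', div_mul_cancel₀ _ (zpow_ne_zero _ hx0)]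
  obtain ⟨z, hz⟩ := IsAlgClosed.exists_pow_nat_eq (Ebar.x F) hn
  have hz0 : z ≠ 0 := by rintro rfl; exact hx0 (hz ▸ zero_pow hn.ne')
  have hw : (α / z ^ m) ^ n = algebraMap F (Ebar F) c' := by
    rw [div_pow, zpow_pow_comm, hz, hαn, Ebar.c_eq_algebraMap,
      mul_div_cancel_right₀ _ (zpow_ne_zero _ hx0)]
  obtain ⟨c, hc⟩ :=
    IsAlgebraic.mem_range_algebraMap ((hw ▸ isAlgebraic_algebraMap c').of_pow hn)
  refine ⟨⟨c, z, hz, ?_⟩, ⟨c', hαn⟩⟩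
  rw [Ebar.c_eq_algebraMap, hc, div_mul_cancel₀ _ (zpow_ne_zero m hz0)]

/-- Let `F` be an algebraically closed field of characteristic zero, `q ∈ F` nonzero
and not a root of unity, `E` the algebraic closure of `F(x)`, and `τ_x` an automorphism
of `E` fixing `F` with `τ_x(x) = q·x`.  If `α ∈ E` satisfies `τ_x^n(α) = q^m·α` for
some positive integer `n` and integer `m`, then `α = c·x^{m/n}` for some `c ∈ F`
(i.e. `α = c·z^m` for some `n`-th root `z` of `x`); more precisely `α^n = c'·x^m`
for some `c' ∈ F`. -/
theorem power_of_x_of_qshift_eigenvalue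
    (F : Type*) [Field F] [IsAlgClosed F] [CharZero F]
    (q : F) (hq0 : q ≠ 0) (hqru : ∀ k : ℕ, 0 < k → q ^ k ≠ 1)
    (τx : Ebar F ≃+* Ebar F)
    (hτxF : ∀ a : F, τx (Ebar.c F a) = Ebar.c F a)
    (hτxx : τx (Ebar.x F) = Ebar.c F q * Ebar.x F)
    (α : Ebar F) (n : ℕ) (hn : 0 < n) (m : ℤ)
    (h : (τx ^ n) α = Ebar.c F q ^ m * α) :
    (∃ (c : F) (z : Ebar F), z ^ n = Ebar.x F ∧ α = Ebar.c F c * z ^ m) ∧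
    (∃ c' : F, α ^ n = Ebar.c F c' * Ebar.x F ^ m) :=
  power_of_x_of_qshift_eigenvalue_general F q hq0 hqru τx hτxF hτxx α n hn m h
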